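/- arXiv:1305.1433 — 3 statements merged into one kernel-verified Lean document; each statement's English description precedes it below -/
import Mathlib

section
/- In an exact category, given a commutative square with horizontal maps admissible monomorphisms (inflations) i : A → B and i' : A' → B' and vertical maps f : A → A', f' : B → B', the square is a push-out if and only if the sequence A → B ⊕ A' → B' given by (i, -f) and (f', i') is a short exact sequence (i.e., (i,-f) is an inflation with cokernel (f', i')). -/
open CategoryTheory Limits ZeroObject

universe v u

variable (C : Type u) [Category.{v} C] [Preadditive C] [HasZeroObject C]
  [HasBinaryBiproducts C]

/-- An exact structure (in the sense of Quillen) on an additive category,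
given by a class of short exact sequences (conflations). -/
structure ExactStructure : Type (max u (v + 1)) where
  /-- the class of short exact sequences -/
  IsSES : ∀ {A B X : C}, (A ⟶ B) → (B ⟶ X) → Prop
  comp_zero : ∀ {A B X : C} {f : A ⟶ B} {g : B ⟶ X}, IsSES f g → f ≫ g = 0
  isKernel : ∀ {A B X : C} {f : A ⟶ B} {g : B ⟶ X} (h : IsSES f g),
      Nonempty (IsLimit (KernelFork.ofι f (comp_zero h)))
  isCokernel : ∀ {A B X : C} {f : A ⟶ B} {g : B ⟶ X} (h : IsSES f g),
      Nonempty (IsColimit (CokernelCofork.ofπ g (comp_zero h)))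
  ses_iso_congr : ∀ {A B X A' B' X' : C} {f : A ⟶ B} {g : B ⟶ X}
      (eA : A' ≅ A) (eB : B ≅ B') (eX : X ≅ X'), IsSES f g →
      IsSES (eA.hom ≫ f ≫ eB.hom) (eB.inv ≫ g ≫ eX.hom)
  id_ses : ∀ A : C, IsSES (𝟙 A) (0 : A ⟶ 0)
  id_ses' : ∀ A : C, IsSES (0 : (0 : C) ⟶ A) (𝟙 A)
  infl_comp : ∀ {A B X : C} (f : A ⟶ B) (f' : B ⟶ X),
      (∃ (Z : C) (g : B ⟶ Z), IsSES f g) → (∃ (Z : C) (g : X ⟶ Z), IsSES f' g) →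
      ∃ (Z : C) (g : X ⟶ Z), IsSES (f ≫ f') g
  defl_comp : ∀ {A B X : C} (g : A ⟶ B) (g' : B ⟶ X),
      (∃ (Z : C) (f : Z ⟶ A), IsSES f g) → (∃ (Z : C) (f : Z ⟶ B), IsSES f g') →
      ∃ (Z : C) (f : Z ⟶ A), IsSES f (g ≫ g')
  pushout_infl : ∀ {A B A' : C} (f : A ⟶ B) (a : A ⟶ A'),
      (∃ (Z : C) (g : B ⟶ Z), IsSES f g) →
      ∃ (P : C) (f' : A' ⟶ P) (b : B ⟶ P), IsPushout a f f' b ∧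
        ∃ (Z : C) (g : P ⟶ Z), IsSES f' g
  pullback_defl : ∀ {B X X' : C} (g : B ⟶ X) (x : X' ⟶ X),
      (∃ (Z : C) (f : Z ⟶ B), IsSES f g) →
      ∃ (P : C) (g' : P ⟶ X') (b : P ⟶ B), IsPullback g' b x g ∧
        ∃ (Z : C) (f : Z ⟶ P), IsSES f g'

variable {C}

namespace ExactStructure

variable (E : ExactStructure C)

/-- inflations (admissible monomorphisms) -/
def Infl {A B : C} (f : A ⟶ B) : Prop := ∃ (X : C) (g : B ⟶ X), E.IsSES f g

/-- deflations (admissible epimorphisms) -/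
def Defl {B X : C} (g : B ⟶ X) : Prop := ∃ (A : C) (f : A ⟶ B), E.IsSES f g

/-- projective objects relative to the exact structure -/
def Proj (P : C) : Prop :=
  ∀ ⦃B X : C⦄ (g : B ⟶ X), E.Defl g → ∀ h : P ⟶ X, ∃ l : P ⟶ B, l ≫ g = h

/-- injective objects relative to the exact structure -/
def Inj (I : C) : Prop :=
  ∀ ⦃A B : C⦄ (f : A ⟶ B), E.Infl f → ∀ h : A ⟶ I, ∃ l : B ⟶ I, f ≫ l = h

/-- the exact category has enough projectives -/
def EnoughProj : Prop :=
  ∀ X : C, ∃ (P K : C) (i : K ⟶ P) (p : P ⟶ X), E.Proj P ∧ E.IsSES i p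

/-- the exact category has enough injectives -/
def EnoughInj : Prop :=
  ∀ X : C, ∃ (I Z : C) (i : X ⟶ I) (p : I ⟶ Z), E.Inj I ∧ E.IsSES i p

end ExactStructure

/-- a morphism factors through an object of a given class of objects -/
def FactorsThru (S : Set C) {X Y : C} (f : X ⟶ Y) : Prop :=
  ∃ (W : C) (a : X ⟶ W) (b : W ⟶ Y), W ∈ S ∧ a ≫ b = f

/-- A cotorsion pair `(𝒰, 𝒱)` on the exact category `(C, E)`. -/
structure CotorsionPair (E : ExactStructure C) where
  U : Set C
  V : Set C
  U_summand : ∀ ⦃X Z : C⦄, Z ∈ U → (∃ (i : X ⟶ Z) (r : Z ⟶ X), i ≫ r = 𝟙 X) → X ∈ U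
  V_summand : ∀ ⦃X Z : C⦄, Z ∈ V → (∃ (i : X ⟶ Z) (r : Z ⟶ X), i ≫ r = 𝟙 X) → X ∈ V
  U_add : ∀ ⦃X Y : C⦄, X ∈ U → Y ∈ U → (X ⊞ Y) ∈ U
  V_add : ∀ ⦃X Y : C⦄, X ∈ V → Y ∈ V → (X ⊞ Y) ∈ V
  ext_vanish : ∀ ⦃A B X : C⦄ {f : A ⟶ B} {g : B ⟶ X}, E.IsSES f g → X ∈ U → A ∈ V →
      ∃ r : B ⟶ A, f ≫ r = 𝟙 A
  res : ∀ B : C, ∃ (VB UB : C) (i : VB ⟶ UB) (p : UB ⟶ B),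
      VB ∈ V ∧ UB ∈ U ∧ E.IsSES i p
  cores : ∀ B : C, ∃ (VB UB : C) (i : B ⟶ VB) (p : VB ⟶ UB),
      VB ∈ V ∧ UB ∈ U ∧ E.IsSES i p

namespace CotorsionPair

variable {E : ExactStructure C} (CP : CotorsionPair E)

/-- `𝒲 = 𝒰 ∩ 𝒱` -/
def W : Set C := CP.U ∩ CP.V

/-- `𝓑⁺`: objects admitting a short exact sequence `V ↣ W ↠ B` with `V ∈ 𝒱`, `W ∈ 𝒲`. -/
def Bplus : Set C :=
  {B | ∃ (V₀ W₀ : C) (i : V₀ ⟶ W₀) (p : W₀ ⟶ B), V₀ ∈ CP.V ∧ W₀ ∈ CP.W ∧ E.IsSES i p}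

/-- `𝓑⁻`: objects admitting a short exact sequence `B ↣ W ↠ U` with `W ∈ 𝒲`, `U ∈ 𝒰`. -/
def Bminus : Set C :=
  {B | ∃ (W₀ U₀ : C) (i : B ⟶ W₀) (p : W₀ ⟶ U₀), W₀ ∈ CP.W ∧ U₀ ∈ CP.U ∧ E.IsSES i p}

/-- the heart subcategory `𝓗 = 𝓑⁺ ∩ 𝓑⁻` -/
def Heart : Set C := CP.Bplus ∩ CP.Bminus

/-- the ideal relation defining the additive quotient `𝓑/𝒲` -/
def wRel : HomRel C := fun {X Y} f g =>
  ∃ (W : C) (a : X ⟶ W) (b : W ⟶ Y), W ∈ CP.W ∧ a ≫ b = f - g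

/-- the quotient category `𝓑/𝒲` -/
abbrev QW := CategoryTheory.Quotient CP.wRel

/-- the quotient functor `π : 𝓑 → 𝓑/𝒲` -/
abbrev qf : C ⥤ CP.QW := Quotient.functor _

/-- `𝓑⁺/𝒲` as a full subcategory of `𝓑/𝒲` -/
abbrev BplusCat := ObjectProperty.FullSubcategory (fun X : CP.QW => X.as ∈ CP.Bplus)

/-- `𝓑⁻/𝒲` as a full subcategory of `𝓑/𝒲` -/
abbrev BminusCat := ObjectProperty.FullSubcategory (fun X : CP.QW => X.as ∈ CP.Bminus)

/-- the heart `𝓗/𝒲` as a full subcategory of `𝓑/𝒲` -/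
abbrev HeartCat := ObjectProperty.FullSubcategory (fun X : CP.QW => X.as ∈ CP.Heart)

/-- the inclusion `𝓑⁺/𝒲 ↪ 𝓑/𝒲` -/
abbrev inclPlus : CP.BplusCat ⥤ CP.QW := ObjectProperty.ι _

/-- the inclusion `𝓑⁻/𝒲 ↪ 𝓑/𝒲` -/
abbrev inclMinus : CP.BminusCat ⥤ CP.QW := ObjectProperty.ι _

/-- the inclusion `𝓗/𝒲 ↪ 𝓑/𝒲` -/
abbrev inclHeart : CP.HeartCat ⥤ CP.QW := ObjectProperty.ι _

/-- `add(𝒰 ∗ 𝒱)`: objects `X` admitting a short exact sequence `U ↣ X ⊕ Y ↠ V`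
with `U ∈ 𝒰`, `V ∈ 𝒱`. -/
def addUV : Set C :=
  {X | ∃ (Y U₀ V₀ : C) (i : U₀ ⟶ X ⊞ Y) (p : X ⊞ Y ⟶ V₀),
    U₀ ∈ CP.U ∧ V₀ ∈ CP.V ∧ E.IsSES i p}

end CotorsionPair



/-!
Direct sums of inflations with identities and shears of biproducts are inflations, so `(i, -f)`
is an inflation whenever `i` is. Both implications then reduce to the characterization of
push-out squares in a preadditive category: the square is a push-out iff `(f', i')` is a cokernel
of `(i, -f)`, and a cokernel of an inflation is the deflation of its short exact sequence up to
isomorphism.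
-/

lemma CategoryTheory.IsPushout.of_isColimit_cokernelCofork {D : Type*} [Category D]
    [Preadditive D] {A B A' B' : D} [HasBinaryBiproduct B A'] {i : A ⟶ B} {f : A ⟶ A'} {f' : B ⟶ B'}
    {i' : A' ⟶ B'} (w : biprod.lift i (-f) ≫ biprod.desc f' i' = 0)
    (h : IsColimit (CokernelCofork.ofπ _ w)) : IsPushout i f f' i' := by
  have sq : CommSq i f f' i' := ⟨sub_eq_zero.mp (by simpa [sub_eq_add_neg] using w)⟩
  exact IsPushout.of_isColimit' sq (sq.isColimitEquivIsColimitCokernelCofork.symm h)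

namespace ExactStructure

variable {E : ExactStructure C}

omit [HasBinaryBiproducts C] in
lemma Infl.comp_iso {A B B' : C} {f : A ⟶ B} (hf : E.Infl f) (e : B ≅ B') :
    E.Infl (f ≫ e.hom) := by
  obtain ⟨Z, g, h⟩ := hf
  exact ⟨Z, e.inv ≫ g, by simpa using E.ses_iso_congr (Iso.refl A) e (Iso.refl Z) h⟩

/-- The push-out of the inflation `0 ↣ A'` along `0 → A` is a biproduct of `A` and `A'`. -/
lemma infl_biprod_inl (E : ExactStructure C) (A A' : C) :
    E.Infl (biprod.inl : A ⟶ A ⊞ A') := by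
  obtain ⟨P, j, b, hP, hj⟩ := E.pushout_infl (0 : (0 : C) ⟶ A') (0 : (0 : C) ⟶ A)
    ⟨A', 𝟙 A', E.id_ses' A'⟩
  have w : (0 : (0 : C) ⟶ A) ≫ (biprod.inl : A ⟶ A ⊞ A') = 0 ≫ biprod.inr := by simp
  let e : P ≅ A ⊞ A' :=
    { hom := hP.desc biprod.inl biprod.inr w
      inv := biprod.desc j b
      hom_inv_id := by apply hP.hom_ext <;> simp
      inv_hom_id := by ext <;> simp }
  simpa [e] using Infl.comp_iso hj e

/-- The push-out of `i` along `biprod.inl : A ⟶ A ⊞ A'` is `biprod.map i (𝟙 A')`. -/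
lemma Infl.biprod_map_id {A B : C} {i : A ⟶ B} (hi : E.Infl i) (A' : C) :
    E.Infl (biprod.map i (𝟙 A')) := by
  obtain ⟨P, j, b, hP, hj⟩ := E.pushout_infl i (biprod.inl : A ⟶ A ⊞ A') hi
  have w : (biprod.inl : A ⟶ A ⊞ A') ≫ biprod.map i (𝟙 A') = i ≫ biprod.inl := by simp
  let e : P ≅ B ⊞ A' :=
    { hom := hP.desc (biprod.map i (𝟙 A')) biprod.inl w
      inv := biprod.desc b (biprod.inr ≫ j)
      hom_inv_id := by
        apply hP.hom_ext
        · rw [hP.inl_desc_assoc]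
          ext <;> simp [← hP.w]
        · simp
      inv_hom_id := by ext <;> simp }
  simpa [e] using Infl.comp_iso hj e

/-- `biprod.lift i g` factors as `biprod.inl`, followed by the shear automorphism of `A ⊞ A'`
given by `g`, followed by `biprod.map i (𝟙 A')`. -/
lemma Infl.biprod_lift {A B A' : C} {i : A ⟶ B} (hi : E.Infl i) (g : A ⟶ A') :
    E.Infl (biprod.lift i g) := by
  let shear : A ⊞ A' ≅ A ⊞ A' :=
    { hom := biprod.lift biprod.fst (biprod.snd + biprod.fst ≫ g)
      inv := biprod.lift biprod.fst (biprod.snd - biprod.fst ≫ g) }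
  have hlift : E.Infl (biprod.lift (𝟙 A) g) := by
    have hfac : biprod.inl ≫ shear.hom = biprod.lift (𝟙 A) g := by ext <;> simp [shear]
    simpa [hfac] using (E.infl_biprod_inl A A').comp_iso shear
  have hfac : biprod.lift (𝟙 A) g ≫ biprod.map i (𝟙 A') = biprod.lift i g := by ext <;> simp
  obtain ⟨Z, p, hp⟩ := E.infl_comp _ _ hlift (hi.biprod_map_id A')
  exact ⟨Z, p, by simpa [hfac] using hp⟩

omit [HasBinaryBiproducts C] in
lemma isSES_of_isColimit_cokernelCofork {A B X : C} {f : A ⟶ B} (hf : E.Infl f) {g : B ⟶ X}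
    (w : f ≫ g = 0) (hg : IsColimit (CokernelCofork.ofπ g w)) : E.IsSES f g := by
  obtain ⟨Z, p, hp⟩ := hf
  obtain ⟨hcoker⟩ := E.isCokernel hp
  have hfac : p ≫ (hcoker.coconePointUniqueUpToIso hg).hom = g :=
    hcoker.comp_coconePointUniqueUpToIso_hom hg WalkingParallelPair.one
  simpa [hfac] using
    E.ses_iso_congr (Iso.refl A) (Iso.refl B) (hcoker.coconePointUniqueUpToIso hg) hp

end ExactStructure

theorem stmt0_general (E : ExactStructure C) {A B A' B' : C}
    (i : A ⟶ B) (i' : A' ⟶ B') (f : A ⟶ A') (f' : B ⟶ B')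
    (hi : E.Infl i) :
    IsPushout i f f' i' ↔ E.IsSES (biprod.lift i (-f)) (biprod.desc f' i') :=
  ⟨fun h => ExactStructure.isSES_of_isColimit_cokernelCofork (hi.biprod_lift (-f)) _
      h.isColimitCokernelCofork,
    fun h => IsPushout.of_isColimit_cokernelCofork _ (E.isCokernel h).some⟩

/-- a commutative square of inflations is a push-out iff the associated
sequence `A ↣ B ⊞ A' ↠ B'` is a short exact sequence. -/
theorem stmt0 (E : ExactStructure C) {A B A' B' : C}
    (i : A ⟶ B) (i' : A' ⟶ B') (f : A ⟶ A') (f' : B ⟶ B')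
    (hi : E.Infl i) (hi' : E.Infl i') (hcomm : i ≫ f' = f ≫ i') :
    IsPushout i f f' i' ↔ E.IsSES (biprod.lift i (-f)) (biprod.desc f' i') :=
  stmt0_general E i i' f f' hi
end

section
/- Let (𝒰,𝒱) be a cotorsion pair on an exact category 𝓑 with enough projectives and injectives, and let V ∈ 𝒱. For any cosyzygy Ω⁻V of V (i.e., there is a short exact sequence V ↣ I ↠ Ω⁻V with I injective), the object Ω⁻V lies in 𝓑⁺, i.e., there is a short exact sequence V' ↣ W ↠ Ω⁻V with W ∈ 𝒰 ∩ 𝒱 and V' ∈ 𝒱. -/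
open CategoryTheory Limits ZeroObject

universe v u

variable (C : Type u) [Category.{v} C] [Preadditive C] [HasZeroObject C]
  [HasBinaryBiproducts C]

variable {C}

/-! Choose an `𝒰`-approximation `V_B ↣ U_B ↠ Ω⁻V` and pull `I ↠ Ω⁻V` back along it. The
pullback `P` sits in conflations `V ↣ P ↠ U_B` and `V_B ↣ P ↠ I`. Injectives lie in `𝒱` and `𝒱`
is closed under extensions, so `P ∈ 𝒱`; the first conflation splits since `Ext¹(𝒰, 𝒱) = 0`, so
`U_B` is a summand of `P` and hence lies in `𝒰 ∩ 𝒱`. -/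

namespace ExactStructure

variable {E : ExactStructure C}

omit [HasBinaryBiproducts C]

lemma isSES_of_iso {A B X A' B' X' : C} {f : A ⟶ B} {g : B ⟶ X}
    {f' : A' ⟶ B'} {g' : B' ⟶ X'} (h : E.IsSES f g) (eA : A' ≅ A) (eB : B ≅ B') (eX : X ≅ X')
    (hf : eA.hom ≫ f ≫ eB.hom = f') (hg : eB.inv ≫ g ≫ eX.hom = g') : E.IsSES f' g' := by
  subst hf hg
  exact E.ses_iso_congr eA eB eX h

lemma mono_of_isSES {A B X : C} {f : A ⟶ B} {g : B ⟶ X} (h : E.IsSES f g) : Mono f :=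
  ⟨fun _ _ huv => Fork.IsLimit.hom_ext (E.isKernel h).some (by simpa using huv)⟩

lemma epi_of_isSES {A B X : C} {f : A ⟶ B} {g : B ⟶ X} (h : E.IsSES f g) : Epi g :=
  ⟨fun _ _ huv => Cofork.IsColimit.hom_ext (E.isCokernel h).some (by simpa using huv)⟩

lemma exists_lift_of_isSES {A B X T : C} {f : A ⟶ B} {g : B ⟶ X} (h : E.IsSES f g)
    (t : T ⟶ B) (ht : t ≫ g = 0) : ∃ l : T ⟶ A, l ≫ f = t :=
  let l := KernelFork.IsLimit.lift' (E.isKernel h).some t ht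
  ⟨l.1, l.2⟩

lemma exists_desc_of_isSES {A B X T : C} {f : A ⟶ B} {g : B ⟶ X} (h : E.IsSES f g)
    (t : B ⟶ T) (ht : f ≫ t = 0) : ∃ l : X ⟶ T, g ≫ l = t :=
  let l := CokernelCofork.IsColimit.desc' (E.isCokernel h).some t ht
  ⟨l.1, l.2⟩

lemma exists_section_of_retraction {A B X : C} {f : A ⟶ B} {g : B ⟶ X} (h : E.IsSES f g)
    {r : B ⟶ A} (hr : f ≫ r = 𝟙 A) : ∃ σ : X ⟶ B, σ ≫ g = 𝟙 X := by
  obtain ⟨σ, hσ⟩ := E.exists_desc_of_isSES h (𝟙 B - r ≫ f)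
    (by simp [Preadditive.comp_sub, reassoc_of% hr])
  have := E.epi_of_isSES h
  refine ⟨σ, ?_⟩
  rw [← cancel_epi g, reassoc_of% hσ]
  simp [Preadditive.sub_comp, E.comp_zero h]

lemma exists_retraction_of_section {A B X : C} {f : A ⟶ B} {g : B ⟶ X} (h : E.IsSES f g)
    {σ : X ⟶ B} (hσ : σ ≫ g = 𝟙 X) : ∃ r : B ⟶ A, f ≫ r = 𝟙 A := by
  obtain ⟨r, hr⟩ := E.exists_lift_of_isSES h (𝟙 B - g ≫ σ)
    (by simp [Preadditive.sub_comp, hσ])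
  have := E.mono_of_isSES h
  refine ⟨r, ?_⟩
  rw [← cancel_mono f, Category.assoc, hr]
  simp [Preadditive.comp_sub, reassoc_of% (E.comp_zero h)]

lemma isSES_of_mono_of_lift {A Z B X : C} {k : Z ⟶ B} {g : B ⟶ X} (h : E.IsSES k g)
    {f : A ⟶ B} [Mono f] (hfg : f ≫ g = 0) {u : Z ⟶ A} (hu : u ≫ f = k) : E.IsSES f g := by
  obtain ⟨v, hv⟩ := E.exists_lift_of_isSES h f hfg
  have := E.mono_of_isSES h
  have huv : u ≫ v = 𝟙 Z := by rw [← cancel_mono k, Category.assoc, hv, hu, Category.id_comp]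
  have hvu : v ≫ u = 𝟙 A := by rw [← cancel_mono f, Category.assoc, hu, hv, Category.id_comp]
  exact E.isSES_of_iso h ⟨v, u, hvu, huv⟩ (Iso.refl B) (Iso.refl X) (by simpa using hv) (by simp)

lemma isSES_of_epi_of_desc {A B R X : C} {f : A ⟶ B} {s : B ⟶ R} (h : E.IsSES f s)
    {g : B ⟶ X} [Epi g] (hfg : f ≫ g = 0) {u : X ⟶ R} (hu : g ≫ u = s) : E.IsSES f g := by
  obtain ⟨v, hv⟩ := E.exists_desc_of_isSES h g hfg
  have := E.epi_of_isSES h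
  have hvu : v ≫ u = 𝟙 R := by rw [← cancel_epi s, reassoc_of% hv, hu, Category.comp_id]
  have huv : u ≫ v = 𝟙 X := by rw [← cancel_epi g, reassoc_of% hu, hv, Category.comp_id]
  exact E.isSES_of_iso h (Iso.refl A) (Iso.refl B) ⟨v, u, hvu, huv⟩ (by simp)
    (by simpa using hv)

lemma exists_isSES_of_isPullback {A B X X' P : C} {f : A ⟶ B} {g : B ⟶ X} (h : E.IsSES f g)
    {g' : P ⟶ X'} {b : P ⟶ B} {x : X' ⟶ X} (hpb : IsPullback g' b x g) :
    ∃ f' : A ⟶ P, E.IsSES f' g' := by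
  obtain ⟨P₀, g₀, b₀, hpb₀, Z, k₀, hk₀⟩ := E.pullback_defl g x ⟨A, f, h⟩
  set e := hpb₀.isoIsPullback _ _ hpb
  have hk : E.IsSES (k₀ ≫ e.hom) g' :=
    E.isSES_of_iso hk₀ (Iso.refl Z) e (Iso.refl X') (by simp) (by simp [e])
  have := E.mono_of_isSES h
  set f' := hpb.lift 0 f (by simp [E.comp_zero h])
  have : Mono f' := mono_of_mono_fac (hpb.lift_snd _ _ _)
  obtain ⟨u, hu⟩ := E.exists_lift_of_isSES h (k₀ ≫ e.hom ≫ b)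
    (by rw [Category.assoc, Category.assoc, ← hpb.w, reassoc_of% (E.comp_zero hk),
      Limits.zero_comp])
  refine ⟨f', E.isSES_of_mono_of_lift hk (hpb.lift_fst _ _ _) (u := u) (hpb.hom_ext ?_ ?_)⟩
  · simp [f', E.comp_zero hk]
  · simp [f', hu]

lemma exists_isSES_of_isPushout {A B X A' P : C} {f : A ⟶ B} {g : B ⟶ X} (h : E.IsSES f g)
    {f' : A' ⟶ P} {b : B ⟶ P} {a : A ⟶ A'} (hpo : IsPushout a f f' b) :
    ∃ g' : P ⟶ X, E.IsSES f' g' ∧ b ≫ g' = g := by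
  obtain ⟨P₀, f₀, b₀, hpo₀, R, s₀, hs₀⟩ := E.pushout_infl f a ⟨X, g, h⟩
  set e := hpo₀.isoIsPushout _ _ hpo
  have hs : E.IsSES f' (e.inv ≫ s₀) :=
    E.isSES_of_iso hs₀ (Iso.refl A') e (Iso.refl R) (by simp [e]) (by simp)
  have := E.epi_of_isSES h
  set g' := hpo.desc 0 g (by simp [E.comp_zero h])
  have : Epi g' := epi_of_epi_fac (hpo.inr_desc _ _ _)
  obtain ⟨u, hu⟩ := E.exists_desc_of_isSES h (b ≫ e.inv ≫ s₀)
    (by rw [← Category.assoc, ← hpo.w, Category.assoc, E.comp_zero hs, Limits.comp_zero])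
  refine ⟨g', E.isSES_of_epi_of_desc hs (hpo.inl_desc _ _ _) (u := u) (hpo.hom_ext ?_ ?_),
    hpo.inr_desc _ _ _⟩
  · simp [g', E.comp_zero hs]
  · simp [g', hu]

lemma isPushout_of_isSES_comp {A Y Z B Q : C} {a : A ⟶ Y} {c : Y ⟶ Z} (h : E.IsSES a c)
    {f : Y ⟶ B} {d : B ⟶ Q} (hd : E.IsSES (a ≫ f) d) {f₁ : Z ⟶ Q} (hw : c ≫ f₁ = f ≫ d) :
    IsPushout c f f₁ d := by
  have := E.epi_of_isSES h
  have := E.epi_of_isSES hd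
  obtain ⟨hcoker⟩ := E.isCokernel hd
  have hdesc (s : PushoutCocone c f) : (a ≫ f) ≫ s.inr = 0 := by
    rw [Category.assoc, ← s.condition, reassoc_of% (E.comp_zero h), Limits.zero_comp]
  let desc (s : PushoutCocone c f) := CokernelCofork.IsColimit.desc' hcoker s.inr (hdesc s)
  have hfac (s : PushoutCocone c f) : d ≫ (desc s).1 = s.inr := (desc s).2
  refine IsPushout.of_isColimit (PushoutCocone.IsColimit.mk hw (fun s => (desc s).1)
    (fun s => ?_) hfac (fun s m _ hm => ?_))
  · rw [← cancel_epi c, reassoc_of% hw, hfac, s.condition]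
  · rw [← cancel_epi d, hm, hfac]

end ExactStructure

namespace CotorsionPair

variable {E : ExactStructure C} (CP : CotorsionPair E)

lemma mem_V_of_inj {I : C} (hI : E.Inj I) : I ∈ CP.V := by
  obtain ⟨V₁, U₁, i, p, hV₁, -, hip⟩ := CP.cores I
  obtain ⟨r, hr⟩ := hI i ⟨U₁, p, hip⟩ (𝟙 I)
  exact CP.V_summand hV₁ ⟨i, r, hr⟩

lemma exists_section_of_isSES {A B X : C} {f : A ⟶ B} {g : B ⟶ X} (h : E.IsSES f g)
    (hX : X ∈ CP.U) (hA : A ∈ CP.V) : ∃ σ : X ⟶ B, σ ≫ g = 𝟙 X :=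
  let ⟨_, hr⟩ := CP.ext_vanish h hX hA
  E.exists_section_of_retraction h hr

lemma mem_V_of_forall_split {Y : C}
    (hsplit : ∀ ⦃B U : C⦄ (f : Y ⟶ B) (g : B ⟶ U), U ∈ CP.U → E.IsSES f g →
      ∃ r : B ⟶ Y, f ≫ r = 𝟙 Y) : Y ∈ CP.V := by
  obtain ⟨V₁, U₁, i, p, hV₁, hU₁, hip⟩ := CP.cores Y
  obtain ⟨r, hr⟩ := hsplit i p hU₁ hip
  exact CP.V_summand hV₁ ⟨i, r, hr⟩

lemma mem_V_of_isSES {A Y Z : C} {a : A ⟶ Y} {c : Y ⟶ Z} (h : E.IsSES a c)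
    (hA : A ∈ CP.V) (hZ : Z ∈ CP.V) : Y ∈ CP.V := by
  refine CP.mem_V_of_forall_split fun B U f g hU hfg => ?_
  -- push `f, g` out along `c`: the result `Z ↣ Q ↠ U` splits, and `d : B ↠ Q` has kernel `A`
  obtain ⟨Q, d, hd⟩ := E.infl_comp a f ⟨Z, c, h⟩ ⟨U, g, hfg⟩
  obtain ⟨f₁, hf₁⟩ := E.exists_desc_of_isSES h (f ≫ d) (by simpa using E.comp_zero hd)
  obtain ⟨g₁, hQ, hdg⟩ := E.exists_isSES_of_isPushout hfg (E.isPushout_of_isSES_comp h hd hf₁)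
  obtain ⟨σ, hσ⟩ := CP.exists_section_of_isSES hQ hU hZ
  -- pulling `d` back along the section `σ` gives `A ↣ P ↠ U`, which splits as well
  obtain ⟨P, d', b', hpb, -⟩ := E.pullback_defl d σ ⟨A, a ≫ f, hd⟩
  obtain ⟨f', hP⟩ := E.exists_isSES_of_isPullback hd hpb
  obtain ⟨σ', hσ'⟩ := CP.exists_section_of_isSES hP hU hA
  refine E.exists_retraction_of_section hfg (σ := σ' ≫ b') ?_
  rw [← hdg, Category.assoc, reassoc_of% hpb.w.symm, hσ, Category.comp_id, hσ']

end CotorsionPair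

theorem stmt3_general (E : ExactStructure C) (CP : CotorsionPair E)
    {V I ΩmV : C} (hV : V ∈ CP.V) (i : V ⟶ I) (p : I ⟶ ΩmV)
    (hinj : E.Inj I) (hses : E.IsSES i p) :
    ∃ (V' W : C) (i' : V' ⟶ W) (p' : W ⟶ ΩmV),
      V' ∈ CP.V ∧ W ∈ CP.W ∧ E.IsSES i' p' := by
  obtain ⟨VB, UB, j, q, hVB, hUB, hres⟩ := CP.res ΩmV
  obtain ⟨P, q', b, hpb, -⟩ := E.pullback_defl p q ⟨V, i, hses⟩
  obtain ⟨_, hVP⟩ := E.exists_isSES_of_isPullback hses hpb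
  obtain ⟨_, hVBP⟩ := E.exists_isSES_of_isPullback hres hpb.flip
  have hP : P ∈ CP.V := CP.mem_V_of_isSES hVBP hVB (CP.mem_V_of_inj hinj)
  obtain ⟨σ, hσ⟩ := CP.exists_section_of_isSES hVP hUB hV
  exact ⟨VB, UB, j, q, hVB, ⟨hUB, CP.V_summand hP ⟨σ, q', hσ⟩⟩, hres⟩

/-- any cosyzygy of an object of `𝒱` lies in `𝓑⁺`. -/
theorem stmt3 (E : ExactStructure C) (CP : CotorsionPair E)
    (hEP : E.EnoughProj) (hEI : E.EnoughInj)
    {V I ΩmV : C} (hV : V ∈ CP.V) (i : V ⟶ I) (p : I ⟶ ΩmV)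
    (hinj : E.Inj I) (hses : E.IsSES i p) :
    ∃ (V' W : C) (i' : V' ⟶ W) (p' : W ⟶ ΩmV),
      V' ∈ CP.V ∧ W ∈ CP.W ∧ E.IsSES i' p' :=
  stmt3_general E CP hV i p hinj hses
end

section
/- Let (𝒰,𝒱) be a cotorsion pair on an exact category 𝓑 with enough projectives and injectives, with associated half exact functor H : 𝓑 → 𝓗/𝒲. For an object B ∈ 𝓑, H(B) = 0 if and only if B ∈ add(𝒰 ∗ 𝒱), i.e. there exist an object Y and a short exact sequence U ↣ B ⊕ Y ↠ V with U ∈ 𝒰 and V ∈ 𝒱. -/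
open CategoryTheory Limits ZeroObject

universe v u

variable (C : Type u) [Category.{v} C] [Preadditive C] [HasZeroObject C]
  [HasBinaryBiproducts C]

variable {C}

/-!
Let `π : 𝓑 → 𝓑/𝒲` be the quotient functor. For `B ∈ 𝓑` choose conflations `V' ↣ Z ↠ B` and
`Z ↣ W₁ ↠ U'` (`Z, U' ∈ 𝒰`, `V' ∈ 𝒱`, `W₁ ∈ 𝒲`) and push the second out along `Z ↠ B`: this gives
`B ↣ M ↠ U'` with `M ∈ 𝓑⁺`, and `π M` is the reflection `σ⁺ π B`. Hence `H B = 0` iff every morphism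
from an object of `𝓑⁻` to `M` factors through `𝒲`. The pushout square also yields a conflation
`Z ↣ B ⊕ W₁ ↠ M`.

If `K ↣ M ↠ V₀` with `K ∈ 𝒰` and `V₀ ∈ 𝒱`, a morphism `N → M` with `N ∈ 𝓑⁻` factors through the
pullback of `M ↠ V₀` along an extension `W_N → V₀` of the composite `N → V₀`; that pullback is an
extension of `W_N` by `K`, so it lies in `𝒰`, and maps from `𝒰` to `𝓑⁺` factor through `𝒲`.
An object of `𝒰 ∗ 𝒱` extended on the right by an object of `𝒰` stays in `𝒰 ∗ 𝒱`, because the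
resulting extension of `U'` by `V₀` splits. Applied to `B ⊕ Y`, this gives `H (B ⊕ Y) = 0`, and
`H B` is a retract of it.

Conversely, if `H B = 0`, the coreflection `V₃ ↣ N ↠ M` of `M` into `𝓑⁻` is zero in `𝓑/𝒲`, which
forces `N ∈ 𝒰`; the pullback defining `N` gives `N ↣ M ⊕ U₃ ↠ V₂` with `V₂ ∈ 𝒱`. Composing with
`Z ↣ B ⊕ W₁ ↠ M`, the kernel of `B ⊕ W₁ ⊕ U₃ ↠ V₂` is an extension of `N` by `Z`, hence in `𝒰`.
-/

theorem CategoryTheory.Retract.isZero {D : Type*} [Category D] {X Y : D} (h : Retract X Y)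
    (hY : IsZero Y) : IsZero X := by
  refine ⟨fun Z => ⟨⟨⟨h.i ≫ hY.to_ Z⟩, fun f => ?_⟩⟩, fun Z => ⟨⟨⟨hY.from_ Z ≫ h.r⟩, fun f => ?_⟩⟩⟩
  · rw [← Category.id_comp f, ← h.retract, Category.assoc, hY.eq_of_src (h.r ≫ f) (hY.to_ Z)]
    rfl
  · rw [← Category.comp_id f, ← h.retract, ← Category.assoc, hY.eq_of_tgt (f ≫ h.i) (hY.from_ Z)]
    rfl

theorem CategoryTheory.ObjectProperty.FullSubcategory.isZero_iff {D : Type*} [Category D]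
    {P : ObjectProperty D} {Z : D} (hZ : IsZero Z) (hPZ : P Z) (X : P.FullSubcategory) :
    IsZero X ↔ IsZero X.obj :=
  ⟨fun h => hZ.of_iso (P.ι.mapIso (h.iso (IsZero.of_full_of_faithful_of_isZero P.ι ⟨Z, hPZ⟩ hZ))),
    IsZero.of_full_of_faithful_of_isZero P.ι X⟩

theorem CategoryTheory.Adjunction.isZero_obj_iff {D D' : Type*} [Category D] [Category D']
    {L : D ⥤ D'} {R : D' ⥤ D} (adj : L ⊣ R) {Z : D} (hZ : IsZero Z) (A : D') :
    IsZero (R.obj A) ↔ ∀ X, Subsingleton (L.obj X ⟶ A) := by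
  refine ⟨fun h X => (adj.homEquiv X A).subsingleton_congr.2 ⟨h.eq_of_tgt⟩, fun h => ?_⟩
  have := (adj.homEquiv _ A).subsingleton_congr.1 (h (R.obj A))
  exact hZ.of_iso ⟨hZ.from_ _, hZ.to_ _, Subsingleton.elim _ _, hZ.eq_of_src _ _⟩

theorem isPullback_biprod_map_id_fst {B X : C} (g : B ⟶ X) (Y : C) :
    IsPullback (biprod.map g (𝟙 Y)) biprod.fst biprod.fst g :=
  IsPullback.of_right (h₁₂ := biprod.snd) (h₂₂ := (0 : X ⟶ 0))
    (by simpa using (IsPullback.of_has_biproduct B Y).flip) (by simp)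
    (IsPullback.of_has_biproduct X Y).flip

theorem isPullback_biprod_id_map_snd {B X : C} (g : B ⟶ X) (Y : C) :
    IsPullback (biprod.map (𝟙 Y) g) biprod.snd biprod.snd g :=
  IsPullback.of_right (h₁₂ := biprod.fst) (h₂₂ := (0 : X ⟶ 0)) (by simp) (by simp)
    (IsPullback.of_has_biproduct Y X)

namespace ExactStructure

section

omit [HasBinaryBiproducts C]

variable {E : ExactStructure C}

namespace IsSES

variable {A B X : C} {f : A ⟶ B} {g : B ⟶ X}

theorem w (h : E.IsSES f g) : f ≫ g = 0 := E.comp_zero h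

theorem w_assoc (h : E.IsSES f g) {T : C} (u : X ⟶ T) : f ≫ g ≫ u = 0 := by
  rw [← Category.assoc, h.w, zero_comp]

theorem mono (h : E.IsSES f g) : Mono f :=
  mono_of_isLimit_fork (E.isKernel h).some

theorem epi (h : E.IsSES f g) : Epi g :=
  epi_of_isColimit_cofork (E.isCokernel h).some

theorem exists_lift (h : E.IsSES f g) {T : C} (t : T ⟶ B) (ht : t ≫ g = 0) :
    ∃ u : T ⟶ A, u ≫ f = t :=
  ⟨_, (KernelFork.IsLimit.lift' (E.isKernel h).some t ht).2⟩

theorem exists_desc (h : E.IsSES f g) {T : C} (t : B ⟶ T) (ht : f ≫ t = 0) :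
    ∃ u : X ⟶ T, g ≫ u = t :=
  ⟨_, (CokernelCofork.IsColimit.desc' (E.isCokernel h).some t ht).2⟩

theorem iso_mid (h : E.IsSES f g) {B' : C} (e : B ≅ B') : E.IsSES (f ≫ e.hom) (e.inv ≫ g) := by
  simpa using E.ses_iso_congr (Iso.refl A) e (Iso.refl X) h

theorem of_isKernel (h : E.IsSES f g) {K : C} {t : K ⟶ B} [Mono t] (ht : t ≫ g = 0)
    (hlift : ∀ {T : C} (u : T ⟶ B), u ≫ g = 0 → ∃ w : T ⟶ K, w ≫ t = u) : E.IsSES t g := by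
  have := h.mono
  obtain ⟨a, ha⟩ := hlift f h.w
  obtain ⟨b, hb⟩ := h.exists_lift t ht
  let e : K ≅ A := ⟨b, a, by simp [← cancel_mono t, ha, hb], by simp [← cancel_mono f, ha, hb]⟩
  simpa [e, hb] using E.ses_iso_congr e (Iso.refl B) (Iso.refl X) h

theorem of_isCokernel (h : E.IsSES f g) {Q : C} {t : B ⟶ Q} [Epi t] (ht : f ≫ t = 0)
    (hdesc : ∀ {T : C} (u : B ⟶ T), f ≫ u = 0 → ∃ w : Q ⟶ T, t ≫ w = u) : E.IsSES f t := by
  have := h.epi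
  obtain ⟨a, ha⟩ := hdesc g h.w
  obtain ⟨b, hb⟩ := h.exists_desc t ht
  let e : X ≅ Q := ⟨b, a, by rw [← cancel_epi g, reassoc_of% hb, ha, Category.comp_id],
    by rw [← cancel_epi t, reassoc_of% ha, hb, Category.comp_id]⟩
  simpa [e, hb] using E.ses_iso_congr (Iso.refl A) (Iso.refl B) e h

theorem of_isPullback (h : E.IsSES f g) {X' P : C} {x : X' ⟶ X} {p₁ : P ⟶ X'} {p₂ : P ⟶ B}
    (hpb : IsPullback p₁ p₂ x g) : ∃ χ : A ⟶ P, χ ≫ p₂ = f ∧ E.IsSES χ p₁ := by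
  obtain ⟨P₀, g₀, b₀, hpb₀, Z₀, f₀, h₀⟩ := E.pullback_defl g x ⟨A, f, h⟩
  have hp₁ : E.IsSES (f₀ ≫ (hpb.isoIsPullback _ _ hpb₀).inv) p₁ := by
    simpa using h₀.iso_mid (hpb.isoIsPullback _ _ hpb₀).symm
  have := h.mono
  have hχ : hpb.lift 0 f (by simp [h.w]) ≫ p₂ = f := hpb.lift_snd _ _ _
  have := mono_of_mono_fac hχ
  refine ⟨_, hχ, hp₁.of_isKernel (hpb.lift_fst _ _ _) fun u hu => ?_⟩
  obtain ⟨w, hw⟩ := h.exists_lift (u ≫ p₂) (by simp [← hpb.w, reassoc_of% hu])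
  exact ⟨w, hpb.hom_ext (by simp [hu]) (by simp [hχ, hw])⟩

theorem of_isPushout (h : E.IsSES f g) {A' P : C} {a : A ⟶ A'} {f' : A' ⟶ P} {b : B ⟶ P}
    (hpo : IsPushout a f f' b) : ∃ g' : P ⟶ X, b ≫ g' = g ∧ E.IsSES f' g' := by
  obtain ⟨P₀, f₀, b₀, hpo₀, Z₀, g₀, h₀⟩ := E.pushout_infl f a ⟨X, g, h⟩
  have hf' : E.IsSES f' ((hpo₀.isoIsPushout _ _ hpo).inv ≫ g₀) := by
    simpa using h₀.iso_mid (hpo₀.isoIsPushout _ _ hpo)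
  have := h.epi
  have hg' : b ≫ hpo.desc 0 g (by simp [h.w]) = g := hpo.inr_desc _ _ _
  have := epi_of_epi_fac hg'
  refine ⟨_, hg', hf'.of_isCokernel (hpo.inl_desc _ _ _) fun u hu => ?_⟩
  obtain ⟨w, hw⟩ := h.exists_desc (b ≫ u) (by simp [← hpo.w_assoc, hu])
  exact ⟨w, hpo.hom_ext (by simp [hu]) (by simp [reassoc_of% hg', hw])⟩

theorem isSES_comp_of_isPushout {K A A' B P : C} {k : K ⟶ A} {a : A ⟶ A'} (hka : E.IsSES k a)
    {f : A ⟶ B} (hf : E.Infl f) {f' : A' ⟶ P} {b : B ⟶ P} (hpo : IsPushout a f f' b) :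
    E.IsSES (k ≫ f) b := by
  obtain ⟨Z, g, hfg⟩ := E.infl_comp k f ⟨A', a, hka⟩ hf
  have := hpo.epi_inr_of_epi hka.epi
  refine hfg.of_isCokernel (by simp [← hpo.w, hka.w_assoc]) fun u hu => ?_
  obtain ⟨s, hs⟩ := hka.exists_desc (f ≫ u) (by simpa using hu)
  exact ⟨hpo.desc s u hs, hpo.inr_desc _ _ _⟩

theorem isSES_comp_of_isPullback {P B₀ B₁ X Q : C} {x : B₀ ⟶ X} {w : X ⟶ Q} (hxw : E.IsSES x w)
    {g : B₁ ⟶ X} (hg : E.Defl g) {p₁ : P ⟶ B₀} {p₂ : P ⟶ B₁} (hpb : IsPullback p₁ p₂ x g) :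
    E.IsSES p₂ (g ≫ w) := by
  obtain ⟨Z, f, hfg⟩ := E.defl_comp g w hg ⟨B₀, x, hxw⟩
  have := hpb.mono_snd_of_mono hxw.mono
  refine hfg.of_isKernel (by simp [← hpb.w_assoc, hxw.w]) fun u hu => ?_
  obtain ⟨s, hs⟩ := hxw.exists_lift (u ≫ g) (by simpa using hu)
  exact ⟨hpb.lift s u hs, hpb.lift_snd _ _ _⟩

theorem exists_section_of_retraction (h : E.IsSES f g) {r : B ⟶ A} (hr : f ≫ r = 𝟙 A) :
    ∃ σ : X ⟶ B, σ ≫ g = 𝟙 X ∧ r ≫ f + g ≫ σ = 𝟙 B := by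
  obtain ⟨σ, hσ⟩ := h.exists_desc (𝟙 B - r ≫ f) (by simp [reassoc_of% hr])
  have := h.epi
  exact ⟨σ, by simp [← cancel_epi g, reassoc_of% hσ, h.w], by rw [hσ]; abel⟩

theorem exists_retraction_of_section (h : E.IsSES f g) {σ : X ⟶ B} (hσ : σ ≫ g = 𝟙 X) :
    ∃ r : B ⟶ A, f ≫ r = 𝟙 A := by
  obtain ⟨r, hr⟩ := h.exists_lift (𝟙 B - g ≫ σ) (by simp [hσ])
  have := h.mono
  exact ⟨r, by simp [← cancel_mono f, hr, h.w_assoc]⟩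

theorem noether {C₁ B' C₂ : C} {g₁ : B ⟶ C₁} (h₁ : E.IsSES f g₁) {f₂ : B ⟶ B'} {g₂ : B' ⟶ C₂}
    (h₂ : E.IsSES f₂ g₂) :
    ∃ (C₃ : C) (g₃ : B' ⟶ C₃) (c : C₁ ⟶ C₃) (c' : C₃ ⟶ C₂),
      E.IsSES (f ≫ f₂) g₃ ∧ E.IsSES c c' := by
  obtain ⟨P, c, g₃, hpo, -⟩ := E.pushout_infl f₂ g₁ ⟨_, _, h₂⟩
  obtain ⟨c', -, hc⟩ := h₂.of_isPushout hpo
  exact ⟨P, g₃, c, c', h₁.isSES_comp_of_isPushout ⟨_, _, h₂⟩ hpo, hc⟩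

theorem conoether {C₁ A' C₂ : C} {g₁ : B ⟶ C₁} (h₁ : E.IsSES f g₁) {f₂ : A' ⟶ C₁}
    {g₂ : C₁ ⟶ C₂} (h₂ : E.IsSES f₂ g₂) :
    ∃ (K : C) (κ : K ⟶ B) (j : A ⟶ K) (k : K ⟶ A'),
      E.IsSES κ (g₁ ≫ g₂) ∧ E.IsSES j k := by
  obtain ⟨P, k, κ, hpb, -⟩ := E.pullback_defl g₁ f₂ ⟨_, _, h₁⟩
  obtain ⟨j, -, hj⟩ := h₁.of_isPullback hpb
  exact ⟨P, κ, j, k, h₂.isSES_comp_of_isPullback ⟨_, _, h₁⟩ hpb, hj⟩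

theorem isPullback_of_isPushout (h : E.IsSES f g) {A' P : C} {a : A ⟶ A'} {f' : A' ⟶ P}
    {b : B ⟶ P} (hpo : IsPushout a f f' b) : IsPullback a f f' b := by
  obtain ⟨g', hg', hf'⟩ := h.of_isPushout hpo
  have := h.mono
  have := hf'.mono
  have key (s : PullbackCone f' b) : ∃ l : s.pt ⟶ A, l ≫ a = s.fst ∧ l ≫ f = s.snd := by
    obtain ⟨l, hl⟩ := h.exists_lift s.snd (by rw [← hg', ← Category.assoc, ← s.condition,
      Category.assoc, hf'.w, Limits.comp_zero])
    exact ⟨l, by rw [← cancel_mono f', Category.assoc, hpo.w, reassoc_of% hl, s.condition], hl⟩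
  exact IsPullback.of_isLimit (PullbackCone.IsLimit.mk hpo.w (fun s => (key s).choose)
    (fun s => (key s).choose_spec.1) (fun s => (key s).choose_spec.2)
    fun s m _ hm => by rw [← cancel_mono f, hm, (key s).choose_spec.2])

end IsSES

end

variable {E : ExactStructure C}

theorem isSES_inl_snd (X Y : C) : E.IsSES (biprod.inl : X ⟶ X ⊞ Y) biprod.snd := by
  obtain ⟨χ, hχ, hses⟩ := (E.id_ses X).of_isPullback (IsPullback.of_has_biproduct X Y).flip
  obtain rfl : χ = biprod.inl := biprod.hom_ext _ _ (by simpa using hχ) (by simpa using hses.w)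
  exact hses

theorem isSES_of_split {A B X : C} {f : A ⟶ B} {g : B ⟶ X} {r : B ⟶ A} {σ : X ⟶ B}
    (hfr : f ≫ r = 𝟙 A) (hσg : σ ≫ g = 𝟙 X) (hid : r ≫ f + g ≫ σ = 𝟙 B) : E.IsSES f g := by
  have hfg : f ≫ g = 0 := by
    simpa [Preadditive.comp_add, Preadditive.add_comp, reassoc_of% hfr, hσg] using
      congrArg (fun φ => f ≫ φ ≫ g) hid
  have hσr : σ ≫ r = 0 := by
    simpa [Preadditive.comp_add, Preadditive.add_comp, reassoc_of% hσg, hfr] using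
      congrArg (fun φ => σ ≫ φ ≫ r) hid
  let e : A ⊞ X ≅ B := ⟨biprod.desc f σ, biprod.lift r g, by ext <;> simp [*], by simp [hid]⟩
  simpa [e] using (isSES_inl_snd (E := E) A X).iso_mid e

namespace IsSES

variable {A B X : C} {f : A ⟶ B} {g : B ⟶ X}

theorem exists_isSES_of_retraction (h : E.IsSES f g) {r : B ⟶ A} (hr : f ≫ r = 𝟙 A) :
    ∃ σ : X ⟶ B, E.IsSES σ r := by
  obtain ⟨σ, hσ, hid⟩ := h.exists_section_of_retraction hr
  exact ⟨σ, isSES_of_split hσ hr (by rw [add_comm, hid])⟩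

theorem biprod_map_id (h : E.IsSES f g) (Y : C) :
    E.IsSES (f ≫ biprod.inl : A ⟶ B ⊞ Y) (biprod.map g (𝟙 Y)) := by
  obtain ⟨χ, hχ, hses⟩ := h.of_isPullback (isPullback_biprod_map_id_fst g Y)
  obtain rfl : χ = f ≫ biprod.inl :=
    biprod.hom_ext _ _ (by simpa using hχ) (by simpa using hses.w =≫ biprod.snd)
  exact hses

theorem biprod_id_map (h : E.IsSES f g) (Y : C) :
    E.IsSES (f ≫ biprod.inr : A ⟶ Y ⊞ B) (biprod.map (𝟙 Y) g) := by
  obtain ⟨χ, hχ, hses⟩ := h.of_isPullback (isPullback_biprod_id_map_snd g Y)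
  obtain rfl : χ = f ≫ biprod.inr :=
    biprod.hom_ext _ _ (by simpa using hses.w =≫ biprod.fst) (by simpa using hχ)
  exact hses

/-- Bühler, Prop. 2.12. -/
theorem isSES_biprod_of_isPullback (h : E.IsSES f g) {X' P : C} {x : X' ⟶ X} {p₁ : P ⟶ X'}
    {p₂ : P ⟶ B} (hpb : IsPullback p₁ p₂ x g) :
    E.IsSES (biprod.lift p₁ p₂) (biprod.desc x (-g)) := by
  have hsplit : E.IsSES (biprod.lift (𝟙 X') x) (biprod.desc x (-𝟙 X)) :=
    isSES_of_split (r := biprod.fst) (σ := -biprod.inr) (by simp) (by simp) (by ext <;> simp)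
  obtain ⟨K, k, hk⟩ := E.defl_comp _ _ ⟨_, _, h.biprod_id_map X'⟩ ⟨_, _, hsplit⟩
  have hcomp : biprod.map (𝟙 X') g ≫ biprod.desc x (-𝟙 X) = biprod.desc x (-g) := by
    ext <;> simp
  rw [hcomp] at hk
  have : Mono (biprod.lift p₁ p₂) := ⟨fun u v huv => hpb.hom_ext
    (by simpa using huv =≫ biprod.fst) (by simpa using huv =≫ biprod.snd)⟩
  refine hk.of_isKernel (by simp [hpb.w]) fun u hu => ?_
  have hu' : (u ≫ biprod.fst) ≫ x = (u ≫ biprod.snd) ≫ g := by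
    rw [biprod.desc_eq] at hu
    simpa [← sub_eq_add_neg, sub_eq_zero] using hu
  exact ⟨hpb.lift _ _ hu', by ext <;> simp⟩

end IsSES

end ExactStructure

namespace FactorsThru

variable {S : Set C} {X Y Z : C}

section

omit [Preadditive C] [HasZeroObject C] [HasBinaryBiproducts C]

theorem precomp {f : Y ⟶ Z} (h : FactorsThru S f) (u : X ⟶ Y) : FactorsThru S (u ≫ f) := by
  obtain ⟨W, a, b, hW, rfl⟩ := h
  exact ⟨W, u ≫ a, b, hW, Category.assoc _ _ _⟩

theorem postcomp {f : X ⟶ Y} (h : FactorsThru S f) (u : Y ⟶ Z) : FactorsThru S (f ≫ u) := by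
  obtain ⟨W, a, b, hW, rfl⟩ := h
  exact ⟨W, a, b ≫ u, hW, (Category.assoc _ _ _).symm⟩

end

omit [HasZeroObject C] [HasBinaryBiproducts C] in
theorem neg {f : X ⟶ Y} (h : FactorsThru S f) : FactorsThru S (-f) := by
  obtain ⟨W, a, b, hW, rfl⟩ := h
  exact ⟨W, -a, b, hW, Preadditive.neg_comp _ _⟩

omit [HasZeroObject C] in
theorem add (hS : ∀ ⦃W W' : C⦄, W ∈ S → W' ∈ S → (W ⊞ W') ∈ S) {f g : X ⟶ Y}
    (hf : FactorsThru S f) (hg : FactorsThru S g) : FactorsThru S (f + g) := by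
  obtain ⟨W, a, b, hW, rfl⟩ := hf
  obtain ⟨W', a', b', hW', rfl⟩ := hg
  exact ⟨W ⊞ W', biprod.lift a a', biprod.desc b b', hS hW hW', biprod.lift_desc⟩

end FactorsThru

namespace CotorsionPair

open ExactStructure Opposite

variable {E : ExactStructure C} {CP : CotorsionPair E}

theorem exists_lift_along_deflation {A B X W : C} {f : A ⟶ B} {g : B ⟶ X} (h : E.IsSES f g)
    (hA : A ∈ CP.V) (hW : W ∈ CP.U) (t : W ⟶ X) : ∃ l : W ⟶ B, l ≫ g = t := by
  obtain ⟨P, g', b, hpb, -⟩ := E.pullback_defl g t ⟨A, f, h⟩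
  obtain ⟨χ, -, hχ⟩ := h.of_isPullback hpb
  obtain ⟨r, hr⟩ := CP.ext_vanish hχ hW hA
  obtain ⟨σ, hσ, -⟩ := hχ.exists_section_of_retraction hr
  exact ⟨σ ≫ b, by rw [Category.assoc, ← hpb.w, reassoc_of% hσ]⟩

theorem exists_extend_along_inflation {A B X V : C} {f : A ⟶ B} {g : B ⟶ X} (h : E.IsSES f g)
    (hX : X ∈ CP.U) (hV : V ∈ CP.V) (t : A ⟶ V) : ∃ l : B ⟶ V, f ≫ l = t := by
  obtain ⟨P, f', b, hpo, -⟩ := E.pushout_infl f t ⟨X, g, h⟩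
  obtain ⟨g', -, hg'⟩ := h.of_isPushout hpo
  obtain ⟨r, hr⟩ := CP.ext_vanish hg' hX hV
  exact ⟨b ≫ r, by rw [← Category.assoc, ← hpo.w, Category.assoc, hr, Category.comp_id]⟩

theorem mem_U_of_isSES {A B X : C} {f : A ⟶ B} {g : B ⟶ X} (h : E.IsSES f g)
    (hA : A ∈ CP.U) (hX : X ∈ CP.U) : B ∈ CP.U := by
  obtain ⟨V', F, i, e, hV', hF, hie⟩ := CP.res B
  obtain ⟨F₁, _, b, hpb, -⟩ := E.pullback_defl e f ⟨V', i, hie⟩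
  obtain ⟨χ, hχ, hχe'⟩ := hie.of_isPullback hpb
  obtain ⟨r, hr⟩ := CP.ext_vanish hχe' hA hV'
  obtain ⟨ρ, hρ⟩ := exists_extend_along_inflation (h.isSES_comp_of_isPullback ⟨V', i, hie⟩ hpb)
    hX hV' r
  obtain ⟨σ, hσ, -⟩ :=
    hie.exists_section_of_retraction (r := ρ) (by rw [← hχ, Category.assoc, hρ, hr])
  exact CP.U_summand hF ⟨σ, e, hσ⟩

theorem mem_V_of_isSES_s12 {A B X : C} {f : A ⟶ B} {g : B ⟶ X} (h : E.IsSES f g)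
    (hA : A ∈ CP.V) (hX : X ∈ CP.V) : B ∈ CP.V := by
  obtain ⟨F, X₀, i, e, hF, hX₀, hie⟩ := CP.cores B
  obtain ⟨F₂, f', b, hpo, -⟩ := E.pushout_infl i g ⟨X₀, e, hie⟩
  obtain ⟨e', hbe', hf'e'⟩ := hie.of_isPushout hpo
  obtain ⟨r, hr⟩ := CP.ext_vanish hf'e' hX₀ hX
  obtain ⟨σ, hσ, -⟩ := hf'e'.exists_section_of_retraction hr
  obtain ⟨l, hl⟩ := exists_lift_along_deflation (h.isSES_comp_of_isPushout ⟨X₀, e, hie⟩ hpo)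
    hA hX₀ σ
  obtain ⟨ρ, hρ⟩ := hie.exists_retraction_of_section (σ := l) (by rw [← hbe', reassoc_of% hl, hσ])
  exact CP.V_summand hF ⟨i, ρ, hρ⟩

theorem factorsThru_W_of_U_Bplus {N P : C} (hN : N ∈ CP.U) (hP : P ∈ CP.Bplus) (c : N ⟶ P) :
    FactorsThru CP.W c := by
  obtain ⟨V₀, W₀, i, p, hV₀, hW₀, hip⟩ := hP
  obtain ⟨l, hl⟩ := exists_lift_along_deflation hip hV₀ hN c
  exact ⟨W₀, l, p, hW₀, hl⟩

theorem factorsThru_W_of_Bminus_V {N V : C} (hN : N ∈ CP.Bminus) (hV : V ∈ CP.V) (c : N ⟶ V) :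
    FactorsThru CP.W c := by
  obtain ⟨W₀, U₀, i, p, hW₀, hU₀, hip⟩ := hN
  obtain ⟨l, hl⟩ := exists_extend_along_inflation hip hU₀ hV c
  exact ⟨W₀, i, l, hW₀, hl⟩

theorem zero_mem_U : (0 : C) ∈ CP.U := by
  obtain ⟨-, U₀, -, -, -, hU₀, -⟩ := CP.res 0
  exact CP.U_summand hU₀ ⟨0, 0, (isZero_zero C).eq_of_src _ _⟩

theorem zero_mem_V : (0 : C) ∈ CP.V := by
  obtain ⟨V₀, -, -, -, hV₀, -, -⟩ := CP.res 0
  exact CP.V_summand hV₀ ⟨0, 0, (isZero_zero C).eq_of_src _ _⟩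

theorem zero_mem_W : (0 : C) ∈ CP.W := ⟨zero_mem_U, zero_mem_V⟩

theorem zero_mem_Bplus : (0 : C) ∈ CP.Bplus :=
  ⟨0, 0, 𝟙 0, 0, zero_mem_V, zero_mem_W, E.id_ses 0⟩

theorem zero_mem_Bminus : (0 : C) ∈ CP.Bminus :=
  ⟨0, 0, 𝟙 0, 0, zero_mem_W, zero_mem_U, E.id_ses 0⟩

theorem biprod_mem_W ⦃X Y : C⦄ (hX : X ∈ CP.W) (hY : Y ∈ CP.W) : (X ⊞ Y) ∈ CP.W :=
  ⟨CP.U_add hX.1 hY.1, CP.V_add hX.2 hY.2⟩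

instance : Congruence CP.wRel where
  equivalence :=
    { refl := fun _ => ⟨0, 0, 0, zero_mem_W, by simp⟩
      symm := fun h => by
        have := FactorsThru.neg h
        rwa [neg_sub] at this
      trans := fun h h' => by
        have := FactorsThru.add biprod_mem_W h h'
        rwa [sub_add_sub_cancel] at this }
  comp_left f _ _ h := by
    have := FactorsThru.precomp h f
    rwa [Preadditive.comp_sub] at this
  comp_right g h := by
    have := FactorsThru.postcomp h g
    rwa [Preadditive.sub_comp] at this

theorem qf_map_eq_iff {X Y : C} (f g : X ⟶ Y) :
    CP.qf.map f = CP.qf.map g ↔ FactorsThru CP.W (f - g) :=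
  Quotient.functor_map_eq_iff _ f g

theorem subsingleton_qf_hom_iff {X Y : C} :
    Subsingleton (CP.qf.obj X ⟶ CP.qf.obj Y) ↔ ∀ f : X ⟶ Y, FactorsThru CP.W f := by
  refine ⟨fun h f => by simpa using (qf_map_eq_iff f 0).1 (Subsingleton.elim _ _), fun h => ⟨?_⟩⟩
  intro u v
  obtain ⟨f, rfl⟩ := CP.qf.map_surjective u
  obtain ⟨g, rfl⟩ := CP.qf.map_surjective v
  exact (qf_map_eq_iff f g).2 (h _)

theorem isZero_qf_obj_zero : IsZero (CP.qf.obj (0 : C)) := by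
  have hfrom (X : C) := (subsingleton_qf_hom_iff (CP := CP)).2
    fun f : 0 ⟶ X => ⟨0, 𝟙 0, f, zero_mem_W, Category.id_comp f⟩
  have hto (X : C) := (subsingleton_qf_hom_iff (CP := CP)).2
    fun f : X ⟶ 0 => ⟨0, f, 𝟙 0, zero_mem_W, Category.comp_id f⟩
  exact ⟨fun Y => ⟨⟨⟨CP.qf.map 0⟩, fun _ => (hfrom Y.as).elim _ _⟩⟩,
    fun Y => ⟨⟨⟨CP.qf.map 0⟩, fun _ => (hto Y.as).elim _ _⟩⟩⟩

/-- `π s : π B ⟶ π M` is a reflection of `π B` into `𝓑⁺/𝒲`, expressed in `𝓑`. -/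
structure IsWReflection (CP : CotorsionPair E) {B M : C} (s : B ⟶ M) : Prop where
  mem_Bplus : M ∈ CP.Bplus
  exists_lift ⦃P : C⦄ : P ∈ CP.Bplus → ∀ f : B ⟶ P, ∃ g : M ⟶ P, s ≫ g = f
  factorsThru_of_comp ⦃P : C⦄ : P ∈ CP.Bplus → ∀ g : M ⟶ P,
    FactorsThru CP.W (s ≫ g) → FactorsThru CP.W g

noncomputable def IsWReflection.corepresentableBy {B M : C} {s : B ⟶ M}
    (hs : CP.IsWReflection s) :
    (CP.inclPlus ⋙ coyoneda.obj (op (CP.qf.obj B))).CorepresentableBy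
      (⟨CP.qf.obj M, hs.mem_Bplus⟩ : CP.BplusCat) where
  homEquiv {P} := Equiv.ofBijective (fun g => CP.qf.map s ≫ g.hom) <| by
    refine ⟨fun g₁ g₂ h => ?_, fun u => ?_⟩
    · obtain ⟨a₁, ha₁⟩ := CP.qf.map_surjective g₁.hom
      obtain ⟨a₂, ha₂⟩ := CP.qf.map_surjective g₂.hom
      have h' : CP.qf.map (s ≫ a₁) = CP.qf.map (s ≫ a₂) := by simpa [ha₁, ha₂] using h
      rw [qf_map_eq_iff, ← Preadditive.comp_sub] at h'
      ext
      rw [← ha₁, ← ha₂, qf_map_eq_iff]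
      exact hs.factorsThru_of_comp P.property (a₁ - a₂) h'
    · obtain ⟨f, rfl⟩ := CP.qf.map_surjective u
      obtain ⟨g, rfl⟩ := hs.exists_lift P.property f
      exact ⟨ObjectProperty.homMk (CP.qf.map g), by simp⟩
  homEquiv_comp _ _ := by simp [Equiv.ofBijective]

theorem isZero_obj_iff_of_isWReflection (σp : CP.QW ⥤ CP.BplusCat) (adj₁ : σp ⊣ CP.inclPlus)
    (σm : CP.QW ⥤ CP.BminusCat) (adj₂ : CP.inclMinus ⊣ σm) (H : C ⥤ CP.HeartCat)
    (hH : H ⋙ CP.inclHeart = CP.qf ⋙ σp ⋙ CP.inclPlus ⋙ σm ⋙ CP.inclMinus)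
    ⦃B M : C⦄ ⦃s : B ⟶ M⦄ (hs : CP.IsWReflection s) :
    IsZero (H.obj B) ↔ ∀ N ∈ CP.Bminus, ∀ f : N ⟶ M, FactorsThru CP.W f := by
  let A := CP.inclPlus.obj (σp.obj (CP.qf.obj B))
  let e : A ≅ CP.qf.obj M :=
    CP.inclPlus.mapIso ((adj₁.corepresentableBy _).uniqueUpToIso hs.corepresentableBy)
  have h0 := isZero_qf_obj_zero (CP := CP)
  have hobj : (H.obj B).obj = (σm.obj A).obj := Functor.congr_obj hH B
  calc IsZero (H.obj B)
      ↔ IsZero (σm.obj A).obj := by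
        rw [ObjectProperty.FullSubcategory.isZero_iff h0 ⟨zero_mem_Bplus, zero_mem_Bminus⟩, hobj]
    _ ↔ IsZero (σm.obj A) := (ObjectProperty.FullSubcategory.isZero_iff h0 zero_mem_Bminus _).symm
    _ ↔ ∀ N : CP.BminusCat, Subsingleton (N.obj ⟶ A) :=
        adj₂.isZero_obj_iff (Z := ⟨_, zero_mem_Bminus⟩)
          ((ObjectProperty.FullSubcategory.isZero_iff h0 zero_mem_Bminus _).2 h0) A
    _ ↔ ∀ N : CP.BminusCat, Subsingleton (N.obj ⟶ CP.qf.obj M) :=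
        forall_congr' fun N => ((Iso.refl _).homCongr e).subsingleton_congr
    _ ↔ ∀ N ∈ CP.Bminus, ∀ f : N ⟶ M, FactorsThru CP.W f :=
        ⟨fun h N hN => subsingleton_qf_hom_iff.1 (h ⟨CP.qf.obj N, hN⟩),
          fun h N => subsingleton_qf_hom_iff.2 (h N.obj.as N.property)⟩

theorem isWReflection_of_isPushout {V' Z B W₁ U' M : C} {j : V' ⟶ Z} {z : Z ⟶ B}
    {m : Z ⟶ W₁} {w : W₁ ⟶ U'} {s : B ⟶ M} {k : W₁ ⟶ M} (hjz : E.IsSES j z) (hV' : V' ∈ CP.V)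
    (hZ : Z ∈ CP.U) (hmw : E.IsSES m w) (hW₁ : W₁ ∈ CP.W) (hU' : U' ∈ CP.U)
    (hpo : IsPushout z m s k) : CP.IsWReflection s where
  mem_Bplus := ⟨V', W₁, j ≫ m, k, hV', hW₁, hjz.isSES_comp_of_isPushout ⟨_, _, hmw⟩ hpo⟩
  exists_lift P hP f := by
    obtain ⟨V_P, W_P, i, p, hV_P, hW_P, hip⟩ := hP
    obtain ⟨l, hl⟩ := exists_lift_along_deflation hip hV_P hZ (z ≫ f)
    obtain ⟨l', hl'⟩ := exists_extend_along_inflation hmw hU' hW_P.2 l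
    exact ⟨hpo.desc f (l' ≫ p) (by rw [reassoc_of% hl', hl]), hpo.inl_desc _ _ _⟩
  factorsThru_of_comp P hP g hg := by
    obtain ⟨t, -, hst⟩ := hmw.of_isPushout hpo
    obtain ⟨W₂, a, b, hW₂, hab⟩ := hg
    obtain ⟨a', ha'⟩ := exists_extend_along_inflation hst hU' hW₂.2 a
    obtain ⟨c, hc⟩ := hst.exists_desc (g - a' ≫ b)
      (by rw [Preadditive.comp_sub, reassoc_of% ha', hab, sub_self])
    obtain rfl : g = a' ≫ b + t ≫ c := by rw [hc]; abel
    exact FactorsThru.add biprod_mem_W ⟨W₂, a', b, hW₂, rfl⟩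
      ((factorsThru_W_of_U_Bplus hU' hP c).precomp t)

theorem exists_isWReflection (B : C) :
    ∃ (M U' : C) (s : B ⟶ M) (t : M ⟶ U'), CP.IsWReflection s ∧ E.IsSES s t ∧ U' ∈ CP.U ∧
      ∃ (Z Y : C) (i : Z ⟶ B ⊞ Y) (p : B ⊞ Y ⟶ M), Z ∈ CP.U ∧ E.IsSES i p := by
  obtain ⟨V', Z, j, z, hV', hZ, hjz⟩ := CP.res B
  obtain ⟨W₁, U', m, w, hW₁, hU', hmw⟩ := CP.cores Z
  obtain ⟨M, s, k, hpo, -⟩ := E.pushout_infl m z ⟨_, _, hmw⟩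
  obtain ⟨t, -, hst⟩ := hmw.of_isPushout hpo
  have hk := hjz.isSES_comp_of_isPushout ⟨_, _, hmw⟩ hpo
  exact ⟨M, U', s, t, isWReflection_of_isPushout hjz hV' hZ hmw ⟨mem_U_of_isSES hmw hZ hU', hW₁⟩
    hU' hpo, hst, hU', Z, W₁, _, _, hZ,
    hk.isSES_biprod_of_isPullback (hmw.isPullback_of_isPushout hpo)⟩

/-- The class `𝒰 ∗ 𝒱`. -/
def UStarV (CP : CotorsionPair E) : Set C :=
  {X | ∃ (U₀ V₀ : C) (i : U₀ ⟶ X) (p : X ⟶ V₀), U₀ ∈ CP.U ∧ V₀ ∈ CP.V ∧ E.IsSES i p}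

theorem mem_UStarV_of_isSES {X M U' : C} (hX : X ∈ CP.UStarV) {s : X ⟶ M} {t : M ⟶ U'}
    (hst : E.IsSES s t) (hU' : U' ∈ CP.U) : M ∈ CP.UStarV := by
  obtain ⟨U₀, V₀, i, p, hU₀, hV₀, hip⟩ := hX
  obtain ⟨Q, q, c, c', hq, hcc'⟩ := hip.noether hst
  obtain ⟨r, hr⟩ := exists_extend_along_inflation hcc' hU' hV₀ (𝟙 V₀)
  obtain ⟨σ, hσr⟩ := hcc'.exists_isSES_of_retraction hr
  obtain ⟨K, κ, j, k, hκ, hjk⟩ := hq.conoether hσr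
  exact ⟨K, V₀, κ, q ≫ r, mem_U_of_isSES hjk hU₀ hU', hV₀, hκ⟩

theorem factorsThru_W_of_mem_UStarV {M N : C} (hM : M ∈ CP.Bplus) (hM' : M ∈ CP.UStarV)
    (hN : N ∈ CP.Bminus) (f : N ⟶ M) : FactorsThru CP.W f := by
  obtain ⟨K, V₀, κ, π, hK, hV₀, hκπ⟩ := hM'
  obtain ⟨W_N, U_N, n, u, hW_N, hU_N, hnu⟩ := hN
  obtain ⟨c, hc⟩ := exists_extend_along_inflation hnu hU_N hV₀ (f ≫ π)
  obtain ⟨Q, q, q', hpb, -⟩ := E.pullback_defl π c ⟨K, κ, hκπ⟩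
  obtain ⟨_, -, hQ⟩ := hκπ.of_isPullback hpb
  rw [← hpb.lift_snd n f hc]
  exact (factorsThru_W_of_U_Bplus (mem_U_of_isSES hQ hK hW_N.1) hM q').precomp _

theorem mem_U_of_factorsThru_W {V₀ N M : C} {χ : V₀ ⟶ N} {ε : N ⟶ M} (h : E.IsSES χ ε)
    (hV₀ : V₀ ∈ CP.V) (hN : N ∈ CP.Bminus) (hε : FactorsThru CP.W ε) : N ∈ CP.U := by
  obtain ⟨W₀, a, b, hW₀, rfl⟩ := hε
  obtain ⟨b', hb'⟩ := exists_lift_along_deflation h hV₀ hW₀.1 b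
  obtain ⟨g, hg⟩ := h.exists_lift (𝟙 N - a ≫ b') (by simp [hb'])
  obtain ⟨W₁, c, d, hW₁, rfl⟩ := factorsThru_W_of_Bminus_V hN hV₀ g
  refine CP.U_summand (CP.U_add hW₀.1 hW₁.1) ⟨biprod.lift a c, biprod.desc b' (d ≫ χ), ?_⟩
  rw [biprod.lift_desc, ← Category.assoc, hg]
  abel

theorem mem_addUV_of_forall_factorsThru_W {M : C}
    (hM : ∀ N ∈ CP.Bminus, ∀ f : N ⟶ M, FactorsThru CP.W f) : M ∈ CP.addUV := by
  obtain ⟨V₂, U₂, v, w, hV₂, hU₂, hvw⟩ := CP.cores M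
  obtain ⟨V₃, U₃, j, q, hV₃, hU₃, hjq⟩ := CP.res V₂
  obtain ⟨N, ε, b, hpb, -⟩ := E.pullback_defl q v ⟨_, _, hjq⟩
  obtain ⟨χ, -, hχε⟩ := hjq.of_isPullback hpb
  have hN : N ∈ CP.Bminus := ⟨U₃, U₂, b, q ≫ w, ⟨hU₃, mem_V_of_isSES_s12 hjq hV₃ hV₂⟩, hU₂,
    hvw.isSES_comp_of_isPullback ⟨_, _, hjq⟩ hpb⟩
  exact ⟨U₃, N, V₂, _, _, mem_U_of_factorsThru_W hχε hV₃ hN (hM N hN ε), hV₂,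
    hjq.isSES_biprod_of_isPullback hpb⟩

theorem mem_addUV_of_isSES_biprod {Z B Y M : C} {i : Z ⟶ B ⊞ Y} {p : B ⊞ Y ⟶ M}
    (hip : E.IsSES i p) (hZ : Z ∈ CP.U) (hM : M ∈ CP.addUV) : B ∈ CP.addUV := by
  obtain ⟨Y', K, V, κ, π, hK, hV, hκπ⟩ := hM
  obtain ⟨K', κ', j, k, hκ', hjk⟩ := (hip.biprod_map_id Y').conoether hκπ
  exact ⟨Y ⊞ Y', K', V, _, _, mem_U_of_isSES hjk hZ hK, hV, hκ'.iso_mid (biprod.associator B Y Y')⟩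

end CotorsionPair

theorem stmt12_general (E : ExactStructure C) (CP : CotorsionPair E)
    (σp : CP.QW ⥤ CP.BplusCat) (adj₁ : σp ⊣ CP.inclPlus)
    (σm : CP.QW ⥤ CP.BminusCat) (adj₂ : CP.inclMinus ⊣ σm)
    (H : C ⥤ CP.HeartCat)
    (hH : H ⋙ CP.inclHeart =
      CP.qf ⋙ σp ⋙ CP.inclPlus ⋙ σm ⋙ CP.inclMinus)
    (B : C) :
    IsZero (H.obj B) ↔ B ∈ CP.addUV := by
  have key := CotorsionPair.isZero_obj_iff_of_isWReflection σp adj₁ σm adj₂ H hH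
  constructor
  · intro hB
    obtain ⟨M, -, s, -, hs, -, -, Z, Y, i, p, hZ, hip⟩ := CP.exists_isWReflection B
    exact CotorsionPair.mem_addUV_of_isSES_biprod hip hZ
      (CotorsionPair.mem_addUV_of_forall_factorsThru_W ((key hs).1 hB))
  · rintro ⟨Y, hBY⟩
    obtain ⟨M, U', s, t, hs, hst, hU', -⟩ := CP.exists_isWReflection (B ⊞ Y)
    have hM := CotorsionPair.mem_UStarV_of_isSES hBY hst hU'
    have hHBY : IsZero (H.obj (B ⊞ Y)) := (key hs).2 fun N hN f =>
      CotorsionPair.factorsThru_W_of_mem_UStarV hs.mem_Bplus hM hN f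
    exact (Retract.map ⟨biprod.inl, biprod.fst, biprod.inl_fst⟩ H).isZero hHBY

/-- `H(B) = 0` iff `B ∈ add(𝒰 ∗ 𝒱)`. -/
theorem stmt12 (E : ExactStructure C) (CP : CotorsionPair E)
    (hEP : E.EnoughProj) (hEI : E.EnoughInj)
    (σp : CP.QW ⥤ CP.BplusCat) (adj₁ : σp ⊣ CP.inclPlus)
    (σm : CP.QW ⥤ CP.BminusCat) (adj₂ : CP.inclMinus ⊣ σm)
    (H : C ⥤ CP.HeartCat)
    (hH : H ⋙ CP.inclHeart =
      CP.qf ⋙ σp ⋙ CP.inclPlus ⋙ σm ⋙ CP.inclMinus)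
    [Abelian CP.HeartCat]
    (B : C) :
    IsZero (H.obj B) ↔ B ∈ CP.addUV :=
  stmt12_general E CP σp adj₁ σm adj₂ H hH B
end
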